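/- arXiv:1112.3776 — 3 statements merged into one kernel-verified Lean document; each statement's English description precedes it below -/
import Mathlib

section
/- If N is a standard normal random variable and E is an exponential random variable with rate 2 (density 2e^{-2x} for x>0) independent of N, then √E · |N| has the same distribution as E. -/
open MeasureTheory ProbabilityTheory

/-- The exponential distribution with rate 2 (density `2 * exp (-2x)` for `x > 0`). -/
noncomputable def expTwo : Measure ℝ :=
  volume.withDensity (ProbabilityTheory.exponentialPDF 2)

/-!
Conditioning on `N`, for `a > 0` we get `P(√E |N| ≥ a) = 𝔼[exp (-2 a² / N²)]`, so everything rests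
on the Laplace transform `𝔼[exp (-s / N²)] = exp (-√(2 s))` of `1 / N²`. As an integral over
`(0, ∞)` this is `∫ exp (-(x² + c / x²)) dx = √π / 2 · exp (-2 √c)`, and the Cauchy–Schlömilch
substitution `u = x - √c / x` turns it into half a Gaussian integral.
-/

open Real Set

lemma hasDerivAt_const_div {b x : ℝ} (hx : x ≠ 0) :
    HasDerivAt (fun x => b / x) (-(b / x ^ 2)) x := by
  simpa [div_eq_mul_inv] using (hasDerivAt_inv hx).const_mul b

lemma strictMonoOn_sub_const_div {b : ℝ} (hb : 0 < b) :
    StrictMonoOn (fun x => x - b / x) (Ioi 0) := fun x hx y _ hxy => by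
  have : b / y < b / x := div_lt_div_of_pos_left hb hx hxy
  simp only
  linarith

lemma image_sub_const_div_Ioi {b : ℝ} (hb : 0 < b) : (fun x => x - b / x) '' Ioi 0 = univ := by
  refine eq_univ_of_forall fun u => ?_
  have hsq : √(u ^ 2 + 4 * b) ^ 2 = u ^ 2 + 4 * b := sq_sqrt (by positivity)
  have hroot : 0 < u + √(u ^ 2 + 4 * b) := by
    have : |u| < √(u ^ 2 + 4 * b) := by
      rw [← sqrt_sq_eq_abs]; exact sqrt_lt_sqrt (sq_nonneg u) (by linarith)
    linarith [neg_abs_le u]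
  -- the positive root of `x ^ 2 - u x - b`
  refine ⟨(u + √(u ^ 2 + 4 * b)) / 2, half_pos hroot, ?_⟩
  field_simp
  nlinarith

lemma setIntegral_Ioi_mul_comp_const_div (g : ℝ → ℝ) {b : ℝ} (hb : 0 < b) :
    ∫ x in Ioi 0, b / x ^ 2 * g (b / x) = ∫ x in Ioi 0, g x := by
  have himg : (fun x => b / x) '' Ioi 0 = Ioi 0 := by
    refine (image_subset_iff.2 fun x hx => div_pos hb hx).antisymm fun y hy => ?_
    exact ⟨b / y, div_pos hb hy, div_div_cancel₀ hb.ne'⟩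
  have hinj : InjOn (fun x => b / x) (Ioi 0) := fun x _ y _ h => by
    simpa [div_div_cancel₀ hb.ne'] using congrArg (b / ·) h
  symm
  calc ∫ x in Ioi 0, g x = ∫ x in (fun x => b / x) '' Ioi 0, g x := by rw [himg]
    _ = ∫ x in Ioi 0, |-(b / x ^ 2)| • g (b / x) :=
      integral_image_eq_integral_abs_deriv_smul measurableSet_Ioi
        (fun x hx => (hasDerivAt_const_div (ne_of_gt hx)).hasDerivWithinAt) hinj g
    _ = ∫ x in Ioi 0, b / x ^ 2 * g (b / x) := by
      refine setIntegral_congr_fun measurableSet_Ioi fun x hx => ?_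
      simp only [smul_eq_mul, abs_neg, abs_of_pos (div_pos hb (pow_pos hx 2))]

/-- The Cauchy–Schlömilch transformation. -/
theorem Function.Even.setIntegral_Ioi_comp_sub_const_div {g : ℝ → ℝ} (hg : g.Even)
    (hint : Integrable g) {b : ℝ} (hb : 0 < b) :
    ∫ x in Ioi 0, g (x - b / x) = (∫ x, g x) / 2 := by
  set f : ℝ → ℝ := fun x => x - b / x
  have hf' : ∀ x ∈ Ioi (0 : ℝ), HasDerivWithinAt f (1 + b / x ^ 2) (Ioi 0) x := fun x hx =>
    (((hasDerivAt_id' x).sub (hasDerivAt_const_div (ne_of_gt hx))).congr_deriv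
      (by ring)).hasDerivWithinAt
  have hinj : InjOn f (Ioi 0) := (strictMonoOn_sub_const_div hb).injOn
  have habs : EqOn (fun x => |1 + b / x ^ 2| • g (f x)) (fun x => (1 + b / x ^ 2) * g (f x))
      (Ioi 0) := fun x _ => by
    simp only [smul_eq_mul, abs_of_pos (by positivity : 0 < 1 + b / x ^ 2)]
  have hchange : ∫ x, g x = ∫ x in Ioi 0, (1 + b / x ^ 2) * g (f x) := by
    rw [← setIntegral_univ, ← image_sub_const_div_Ioi hb,
      integral_image_eq_integral_abs_deriv_smul measurableSet_Ioi hf' hinj,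
      setIntegral_congr_fun measurableSet_Ioi habs]
  have hint_jac : IntegrableOn (fun x => (1 + b / x ^ 2) * g (f x)) (Ioi 0) := by
    refine IntegrableOn.congr_fun ?_ habs measurableSet_Ioi
    rw [← integrableOn_image_iff_integrableOn_abs_deriv_smul measurableSet_Ioi hf' hinj,
      image_sub_const_div_Ioi hb]
    exact hint.integrableOn
  have hint_comp : IntegrableOn (fun x => g (f x)) (Ioi 0) := by
    have hbound : ∀ᵐ x ∂volume.restrict (Ioi 0), ‖(1 + b / x ^ 2)⁻¹‖ ≤ 1 := by
      filter_upwards [ae_restrict_mem measurableSet_Ioi] with x hx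
      have : 1 ≤ 1 + b / x ^ 2 := le_add_of_nonneg_right (by positivity)
      rw [norm_inv, Real.norm_of_nonneg (by linarith)]
      exact inv_le_one_of_one_le₀ this
    refine IntegrableOn.congr_fun (hint_jac.bdd_mul
      (by fun_prop : Measurable fun x : ℝ => (1 + b / x ^ 2)⁻¹).aestronglyMeasurable hbound)
      (fun x _ => inv_mul_cancel_left₀ (by positivity) _) measurableSet_Ioi
  have hsymm : ∫ x in Ioi 0, b / x ^ 2 * g (f x) = ∫ x in Ioi 0, g (f x) := by
    rw [← setIntegral_Ioi_mul_comp_const_div (fun x => g (f x)) hb]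
    refine setIntegral_congr_fun measurableSet_Ioi fun x hx => ?_
    have : f (b / x) = -f x := by simp only [f, div_div_cancel₀ hb.ne']; ring
    simp only [this, hg (f x)]
  have hsplit : ∫ x in Ioi 0, (1 + b / x ^ 2) * g (f x)
      = (∫ x in Ioi 0, g (f x)) + ∫ x in Ioi 0, b / x ^ 2 * g (f x) := by
    have hint_weighted : IntegrableOn (fun x => b / x ^ 2 * g (f x)) (Ioi 0) :=
      (hint_jac.sub hint_comp).congr_fun (fun x _ => by simp only [Pi.sub_apply]; ring)
        measurableSet_Ioi
    rw [← integral_add hint_comp hint_weighted]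
    exact setIntegral_congr_fun measurableSet_Ioi fun x _ => by ring
  rw [hchange, hsplit, hsymm]
  ring

lemma integral_Ioi_exp_neg_sq_add_div_sq {c : ℝ} (hc : 0 ≤ c) :
    ∫ x in Ioi 0, exp (-(x ^ 2 + c / x ^ 2)) = √π / 2 * exp (-(2 * √c)) := by
  rcases hc.eq_or_lt with rfl | hc
  · simpa using integral_gaussian_Ioi 1
  have hb : 0 < √c := sqrt_pos.2 hc
  have hsplit : ∀ x ∈ Ioi (0 : ℝ),
      exp (-(x ^ 2 + c / x ^ 2)) = exp (-(x - √c / x) ^ 2) * exp (-(2 * √c)) := fun x hx => by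
    have hx0 : x ≠ 0 := ne_of_gt hx
    rw [← exp_add]
    congr 1
    field_simp
    linear_combination sq_sqrt hc.le
  have heven : (fun u : ℝ => exp (-u ^ 2)).Even := fun u => by simp
  have hint : Integrable fun u : ℝ => exp (-u ^ 2) := by
    simpa using integrable_exp_neg_mul_sq one_pos
  rw [setIntegral_congr_fun measurableSet_Ioi hsplit, integral_mul_const,
    heven.setIntegral_Ioi_comp_sub_const_div hint hb]
  simpa using congrArg (· / 2 * exp (-(2 * √c))) (integral_gaussian 1)

lemma integral_exp_neg_div_sq_gaussianReal {s : ℝ} (hs : 0 ≤ s) :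
    ∫ x, exp (-(s / x ^ 2)) ∂gaussianReal 0 1 = exp (-√(2 * s)) := by
  have hpdf : ∀ x, gaussianPDFReal 0 1 x • exp (-(s / x ^ 2))
      = (√(2 * π))⁻¹ * (exp (-(|x| ^ 2 / 2)) * exp (-(s / |x| ^ 2))) := fun x => by
    simp only [gaussianPDFReal, NNReal.coe_one, mul_one, sub_zero, neg_div, smul_eq_mul, sq_abs]
    ring
  have h2 : (0 : ℝ) < √2 := by positivity
  have hsub : ∫ x in Ioi 0, exp (-(x ^ 2 / 2)) * exp (-(s / x ^ 2))
      = √2 * ∫ u in Ioi 0, exp (-(u ^ 2 + s / 2 / u ^ 2)) := by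
    have := integral_comp_mul_left_Ioi' (fun x => exp (-(x ^ 2 / 2)) * exp (-(s / x ^ 2))) 0 h2
    rw [mul_zero] at this
    rw [← this, smul_eq_mul]
    congr 1
    refine setIntegral_congr_fun measurableSet_Ioi fun u hu => ?_
    have : √2 ^ 2 = 2 := sq_sqrt zero_le_two
    rw [← exp_add, mul_pow, this]
    field_simp
    ring_nf
  rw [integral_gaussianReal_eq_integral_smul one_ne_zero]
  simp_rw [hpdf]
  rw [integral_const_mul, integral_comp_abs (f := fun y => exp (-(y ^ 2 / 2)) * exp (-(s / y ^ 2))),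
    hsub, integral_Ioi_exp_neg_sq_add_div_sq (by positivity)]
  have : 2 * √(s / 2) = √(2 * s) := by
    rw [show 2 * s = 2 ^ 2 * (s / 2) by ring, sqrt_mul (by positivity), sqrt_sq zero_le_two]
  rw [this, sqrt_mul zero_le_two]
  field_simp

instance nullSingletonClass_expMeasure (r : ℝ) : NullSingletonClass (expMeasure r) := by
  unfold expMeasure gammaMeasure
  infer_instance

lemma expMeasure_Ici {r : ℝ} (hr : 0 < r) (a : ℝ) :
    expMeasure r (Ici a) = ENNReal.ofReal (exp (-(r * max a 0))) := by
  have := isProbabilityMeasure_expMeasure hr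
  rw [← compl_Iio, prob_compl_eq_one_sub measurableSet_Iio, measure_congr Iio_ae_eq_Iic,
    ← ofReal_cdf, ← ENNReal.ofReal_one, ← ENNReal.ofReal_sub _ (cdf_nonneg _ a),
    cdf_expMeasure_eq hr]
  congr 1
  split_ifs with ha
  · simp [max_eq_left ha]
  · simp [max_eq_right (le_of_not_ge ha)]

theorem map_sqrt_mul_abs_gaussianReal_prod_expMeasure {r : ℝ} (hr : 0 < r) :
    ((gaussianReal 0 1).prod (expMeasure r)).map (fun p => √p.2 * |p.1|)
      = expMeasure (√(2 * r)) := by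
  have := isProbabilityMeasure_expMeasure hr
  set φ : ℝ × ℝ → ℝ := fun p => √p.2 * |p.1|
  have hφ : Measurable φ := by fun_prop
  refine Measure.ext_of_Ici _ _ fun a => ?_
  rw [Measure.map_apply hφ measurableSet_Ici, expMeasure_Ici (by positivity)]
  rcases le_or_gt a 0 with ha | ha
  · have : φ ⁻¹' Ici a = univ := eq_univ_of_forall fun p => ha.trans (by positivity)
    simp [this, max_eq_right ha]
  have hslice : ∀ᵐ x ∂gaussianReal 0 1,
      expMeasure r (Prod.mk x ⁻¹' (φ ⁻¹' Ici a))
        = ENNReal.ofReal (exp (-(r * a ^ 2 / x ^ 2))) := by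
    have := nullSingletonClass_gaussianReal (μ := 0) one_ne_zero
    filter_upwards [Measure.ae_ne _ 0] with x hx
    have hx' : 0 < |x| := abs_pos.2 hx
    have : Prod.mk x ⁻¹' (φ ⁻¹' Ici a) = Ici ((a / |x|) ^ 2) := by
      ext y
      simp only [mem_preimage, mem_Ici, φ, ← div_le_iff₀ hx']
      exact le_sqrt' (by positivity)
    rw [this, expMeasure_Ici hr, max_eq_left (sq_nonneg _), div_pow, sq_abs, mul_div_assoc]
  have hint : Integrable (fun x => exp (-(r * a ^ 2 / x ^ 2))) (gaussianReal 0 1) :=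
    Integrable.of_bound (by fun_prop : Measurable _).aestronglyMeasurable 1 (ae_of_all _ fun x => by
      rw [norm_of_nonneg (exp_pos _).le, exp_le_one_iff, neg_nonpos]; positivity)
  rw [Measure.prod_apply (hφ measurableSet_Ici), lintegral_congr_ae hslice,
    ← ofReal_integral_eq_lintegral_ofReal hint (ae_of_all _ fun _ => (exp_pos _).le),
    integral_exp_neg_div_sq_gaussianReal (by positivity), max_eq_left ha.le,
    ← sqrt_sq ha.le, ← sqrt_mul (by positivity), sqrt_sq ha.le]
  ring_nf

lemma expTwo_eq_expMeasure : expTwo = expMeasure 2 := rfl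

/-- If `N` is standard normal and `E` is exponential with rate 2, independent of `N`,
then `√E * |N|` has the same distribution as `E`. -/
theorem stmt0 {Ω : Type*} [MeasurableSpace Ω] (P : Measure Ω) [IsProbabilityMeasure P]
    (N E : Ω → ℝ) (hNm : Measurable N) (hEm : Measurable E)
    (hN : P.map N = gaussianReal 0 1)
    (hE : P.map E = expTwo)
    (hindep : IndepFun N E P) :
    IdentDistrib (fun ω => Real.sqrt (E ω) * |N ω|) E P P := by
  have hpair : P.map (fun ω => (N ω, E ω)) = (gaussianReal 0 1).prod expTwo := by
    rw [(indepFun_iff_map_prod_eq_prod_map_map hNm.aemeasurable hEm.aemeasurable).mp hindep,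
      hN, hE]
  have hrate : √(2 * 2 : ℝ) = 2 := by rw [← sq, sqrt_sq zero_le_two]
  refine ⟨by fun_prop, hEm.aemeasurable, ?_⟩
  calc P.map (fun ω => √(E ω) * |N ω|)
      = (P.map fun ω => (N ω, E ω)).map fun p => √p.2 * |p.1| :=
        (Measure.map_map (g := fun p : ℝ × ℝ => √p.2 * |p.1|) (by fun_prop)
          (hNm.prodMk hEm)).symm
    _ = P.map E := by
      rw [hpair, hE, expTwo_eq_expMeasure, map_sqrt_mul_abs_gaussianReal_prod_expMeasure two_pos,
        hrate]
end

section
/- Let (N_i)_{i≥0} be i.i.d. standard normal random variables. Then the infinite product ∏_{i=0}^∞ |N_i|^{2^{-i}} converges almost surely to a finite, strictly positive limit. -/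
/-!
Writing `|N i|^(2^{-i}) = exp (2^{-i} log |N i|)`, it suffices that the series
`∑ 2^{-i} log |N i|` converges almost surely. Since the Gaussian density is bounded and `log` is
integrable near `0`, `E |log |N i||` is a finite constant, so the series has summable `L¹` norms and
therefore converges absolutely almost surely.
-/

open MeasureTheory ProbabilityTheory Filter Real Set
open scoped ENNReal NNReal Topology

lemma integrable_log_of_le_smul_volume {μ : Measure ℝ} {c : ℝ≥0∞} (hc : c ≠ ∞)
    (hμ : μ ≤ c • volume) (hid : Integrable id μ) : Integrable log μ := by
  rw [← integrableOn_univ, ← union_compl_self (Icc (-1 : ℝ) 1), integrableOn_union]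
  constructor
  · have hvol : IntegrableOn log (Icc (-1) 1) volume :=
      (intervalIntegrable_iff_integrableOn_Icc_of_le (by norm_num)).1
        intervalIntegral.intervalIntegrable_log'
    refine IntegrableOn.mono_measure ?_ hμ
    simpa only [IntegrableOn, Measure.restrict_smul] using hvol.smul_measure hc
  · refine hid.norm.integrableOn.mono' measurable_log.aestronglyMeasurable ?_
    filter_upwards [ae_restrict_mem measurableSet_Icc.compl] with x hx
    have hx1 : 1 ≤ |x| := not_lt.1 fun h => hx (Ioo_subset_Icc_self (abs_lt.1 h))
    rw [Real.norm_eq_abs, ← log_abs, abs_of_nonneg (log_nonneg hx1)]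
    exact log_le_self (abs_nonneg x)

lemma gaussianPDFReal_le (m : ℝ) (v : ℝ≥0) (x : ℝ) :
    gaussianPDFReal m v x ≤ (√(2 * π * v))⁻¹ :=
  mul_le_of_le_one_right (by positivity) <| exp_le_one_iff.2 <|
    div_nonpos_of_nonpos_of_nonneg (neg_nonpos.2 (sq_nonneg _)) (by positivity)

lemma gaussianReal_le_smul_volume (m : ℝ) {v : ℝ≥0} (hv : v ≠ 0) :
    gaussianReal m v ≤ ENNReal.ofReal (√(2 * π * v))⁻¹ • volume := by
  rw [gaussianReal_of_var_ne_zero m hv, ← withDensity_const]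
  exact withDensity_mono <| ae_of_all _ fun x => ENNReal.ofReal_le_ofReal (gaussianPDFReal_le m v x)

lemma integrable_log_gaussianReal (m : ℝ) {v : ℝ≥0} (hv : v ≠ 0) :
    Integrable log (gaussianReal m v) :=
  integrable_log_of_le_smul_volume ENNReal.ofReal_ne_top (gaussianReal_le_smul_volume m hv)
    ((memLp_id_gaussianReal 1).integrable le_rfl)

lemma ae_summable_mul_log {Ω : Type*} [MeasurableSpace Ω] {P : Measure Ω} {μ : Measure ℝ}
    {X : ℕ → Ω → ℝ} (hX : ∀ i, Measurable (X i)) (hlaw : ∀ i, P.map (X i) = μ)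
    (hlog : Integrable log μ) {a : ℕ → ℝ} (ha : Summable a) :
    ∀ᵐ ω ∂P, Summable fun i => a i * log (X i ω) := by
  have hterm : ∀ i, eLpNorm (fun ω => a i * log (X i ω)) 1 P = ‖a i‖ₑ * eLpNorm log 1 μ := by
    intro i
    rw [← hlaw i, eLpNorm_map_measure (hlaw i ▸ hlog.aestronglyMeasurable) (hX i).aemeasurable]
    exact eLpNorm_const_smul (a i) (log ∘ X i) 1 P
  have hsum : ∑' i, eLpNorm (fun ω => a i * log (X i ω)) 1 P ≠ ∞ := by
    simp_rw [hterm, ENNReal.tsum_mul_right]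
    exact ENNReal.mul_ne_top (tsum_enorm_ne_top_iff_summable_norm.2 ha.abs)
      (memLp_one_iff_integrable.2 hlog).eLpNorm_ne_top
  filter_upwards [summable_norm_of_tsum_eLpNorm_ne_top le_rfl
    (fun i => (measurable_log.comp (hX i)).const_mul (a i) |>.aestronglyMeasurable) hsum]
    with ω hω using hω.of_norm

lemma tendsto_prod_abs_rpow {x a : ℕ → ℝ} (hx : ∀ i, x i ≠ 0)
    (hs : Summable fun i => a i * log (x i)) :
    Tendsto (fun n => ∏ i ∈ Finset.range n, |x i| ^ a i) atTop
      (𝓝 (exp (∑' i, a i * log (x i)))) := by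
  have hprod : ∀ n, ∏ i ∈ Finset.range n, |x i| ^ a i
      = exp (∑ i ∈ Finset.range n, a i * log (x i)) := fun n => by
    rw [exp_sum]
    refine Finset.prod_congr rfl fun i _ => ?_
    rw [rpow_def_of_pos (abs_pos.2 (hx i)), log_abs, mul_comm]
  simp_rw [hprod]
  exact (continuous_exp.tendsto _).comp hs.hasSum.tendsto_sum_nat

theorem ae_exists_tendsto_prod_abs_rpow {Ω : Type*} [MeasurableSpace Ω] {P : Measure Ω}
    {μ : Measure ℝ} {X : ℕ → Ω → ℝ} (hX : ∀ i, Measurable (X i)) (hlaw : ∀ i, P.map (X i) = μ)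
    (hlog : Integrable log μ) (hμ0 : μ {0} = 0) {a : ℕ → ℝ} (ha : Summable a) :
    ∀ᵐ ω ∂P, ∃ l : ℝ, 0 < l ∧
      Tendsto (fun n => ∏ i ∈ Finset.range n, |X i ω| ^ a i) atTop (𝓝 l) := by
  have hne : ∀ᵐ ω ∂P, ∀ i, X i ω ≠ 0 := ae_all_iff.2 fun i =>
    ae_of_ae_map (hX i).aemeasurable (hlaw i ▸ measure_eq_zero_iff_ae_notMem.1 hμ0)
  filter_upwards [ae_summable_mul_log hX hlaw hlog ha, hne] with ω hs hω
  exact ⟨_, exp_pos _, tendsto_prod_abs_rpow hω hs⟩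

lemma summable_two_rpow_neg_natCast : Summable fun i : ℕ => (2 : ℝ) ^ (-(i : ℝ)) := by
  simpa only [rpow_neg zero_le_two, rpow_natCast, one_div, inv_pow] using summable_geometric_two

theorem stmt1_general {Ω : Type*} [MeasurableSpace Ω] (P : Measure Ω)
    (N : ℕ → Ω → ℝ) (hm : ∀ i, Measurable (N i))
    (hlaw : ∀ i, P.map (N i) = gaussianReal 0 1) :
    ∀ᵐ ω ∂P, ∃ l : ℝ, 0 < l ∧
      Tendsto (fun n => ∏ i ∈ Finset.range n, |N i ω| ^ ((2 : ℝ) ^ (-(i : ℝ))))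
        atTop (nhds l) :=
  ae_exists_tendsto_prod_abs_rpow hm hlaw (integrable_log_gaussianReal 0 one_ne_zero)
    (gaussianReal_absolutelyContinuous 0 one_ne_zero (measure_singleton 0))
    summable_two_rpow_neg_natCast

/-- For i.i.d. standard normal random variables `(N i)`, the partial products
`∏_{i=0}^{n-1} |N i|^(2^{-i})` converge almost surely to a finite strictly positive limit. -/
theorem stmt1 {Ω : Type*} [MeasurableSpace Ω] (P : Measure Ω) [IsProbabilityMeasure P]
    (N : ℕ → Ω → ℝ) (hm : ∀ i, Measurable (N i))
    (hlaw : ∀ i, P.map (N i) = gaussianReal 0 1)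
    (hindep : iIndepFun N P) :
    ∀ᵐ ω ∂P, ∃ l : ℝ, 0 < l ∧
      Tendsto (fun n => ∏ i ∈ Finset.range n, |N i ω| ^ ((2 : ℝ) ^ (-(i : ℝ))))
        atTop (nhds l) :=
  stmt1_general P N hm hlaw
end

section
/- Let B be a Brownian motion on [0,1] and D = osc(B;[0,1]) = sup_{s,t∈[0,1]}|B(t)−B(s)| its oscillation. Let D₁, D₂, … be i.i.d. copies of D. Then the infinite product ∏_{i=1}^∞ D_i^{2^{-(i-1)}} converges almost surely in (0,∞). -/
/-!
Let `X = osc(B; [0, 1])`. Each `log D_{i+1}` has the law of `log X`, so once `log X` is integrable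
the series `∑ 2⁻ⁱ |log D_{i+1}|` has finite expectation `2 E|log X|`; hence `∑ 2⁻ⁱ log D_{i+1}`
converges a.s., and the product is its exponential.

Integrability of `log X` comes from two tail bounds. Below, `X ≥ |B 1 - B 0|` and the standard
Gaussian density is at most `1/2`, so `P(X < ε) ≤ ε` and `E (log X)⁻ ≤ ∫₀^∞ e⁻ᵗ dt = 1` by the
layer cake formula. Above, `(log X)⁺ ≤ X` and dyadic chaining gives `X ≤ 2 ∑ₙ Uₙ`, where `Uₙ` is
the `ℓ⁴` norm of the `2ⁿ` increments of `B` over the dyadic intervals of length `2⁻ⁿ`; Jensen and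
scaling give `E Uₙ ≤ (E Uₙ⁴)^(1/4) = (3 · 2⁻ⁿ)^(1/4)`, which is summable.
-/

open MeasureTheory ProbabilityTheory

/-- A (two-sided) standard Brownian motion: continuous paths, `B 0 = 0`, Gaussian
increments of variance `|t - s|` and independent increments over disjoint intervals. -/
structure IsTwoSidedBM {Ω : Type*} [MeasurableSpace Ω] (B : ℝ → Ω → ℝ)
    (P : Measure Ω) : Prop where
  measurable : ∀ t, Measurable (B t)
  init : ∀ᵐ ω ∂P, B 0 ω = 0
  cont : ∀ᵐ ω ∂P, Continuous fun t => B t ω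
  incr : ∀ s t : ℝ, P.map (fun ω => B t ω - B s ω) = gaussianReal 0 (Real.nnabs (t - s))
  indep_incr : ∀ (n : ℕ) (t : Fin (n + 1) → ℝ), Monotone t →
    iIndepFun
      (fun i : Fin n => fun ω => B (t i.succ) ω - B (t i.castSucc) ω) P

open Real Filter Set
open scoped NNReal ENNReal Topology

lemma tendsto_prod_rpow_of_summable_mul_log {d c : ℕ → ℝ} (hd : ∀ i, 0 < d i)
    (hs : Summable fun i => c i * log (d i)) :
    Tendsto (fun n => ∏ i ∈ Finset.range n, d i ^ c i) atTop (𝓝 (exp (∑' i, c i * log (d i)))) := by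
  have hprod (n : ℕ) :
      ∏ i ∈ Finset.range n, d i ^ c i = exp (∑ i ∈ Finset.range n, c i * log (d i)) := by
    rw [exp_sum]
    exact Finset.prod_congr rfl fun i _ => by rw [rpow_def_of_pos (hd i), mul_comm]
  simp only [hprod]
  exact (continuous_exp.tendsto _).comp hs.hasSum.tendsto_sum_nat

lemma ae_summable_geometric_mul_of_identDistrib {Ω Ω₀ : Type*} [MeasurableSpace Ω]
    [MeasurableSpace Ω₀] {μ : Measure Ω} {ν : Measure Ω₀} {Z : ℕ → Ω → ℝ} {Y : Ω₀ → ℝ}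
    (hZ : ∀ i, IdentDistrib (Z i) Y μ ν) (hY : Integrable Y ν) {r : ℝ} (hr : |r| < 1) :
    ∀ᵐ ω ∂μ, Summable fun i => r ^ i * Z i ω := by
  have hnorm (i : ℕ) : eLpNorm (r ^ i • Z i) 1 μ = ‖r‖ₑ ^ i * eLpNorm Y 1 ν := by
    rw [eLpNorm_const_smul, (hZ i).eLpNorm_eq, enorm_pow]
  have hgeom : ∑' i, eLpNorm (r ^ i • Z i) 1 μ ≠ ∞ := by
    simp only [hnorm, ENNReal.tsum_mul_right, ENNReal.tsum_geometric]
    refine ENNReal.mul_ne_top (ENNReal.inv_ne_top.2 ?_) (memLp_one_iff_integrable.2 hY).2.ne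
    rw [← ofReal_norm, ← ENNReal.ofReal_one, ← ENNReal.ofReal_sub _ (norm_nonneg r)]
    simpa using hr
  filter_upwards [summable_norm_of_tsum_eLpNorm_ne_top le_rfl
    (fun i => ((hZ i).aestronglyMeasurable_fst).const_smul _) hgeom] with ω hω
  exact hω.of_norm

section SmallBall

variable {α : Type*} [MeasurableSpace α] {μ : Measure α} {Y : α → ℝ}

lemma ae_pos_of_measure_lt_le (hsmall : ∀ ε, μ {a | Y a < ε} ≤ ENNReal.ofReal ε) :
    ∀ᵐ a ∂μ, 0 < Y a := by
  simp only [ae_iff, not_lt]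
  refine le_antisymm (ENNReal.le_of_forall_pos_le_add fun ε hε _ => ?_) bot_le
  calc μ {a | Y a ≤ 0} ≤ μ {a | Y a < ε} := measure_mono fun a (ha : Y a ≤ 0) => ha.trans_lt hε
    _ ≤ 0 + ε := by simpa using hsmall ε

lemma lintegral_ofReal_neg_log_le_one (hY : AEMeasurable Y μ)
    (hsmall : ∀ ε, μ {a | Y a < ε} ≤ ENNReal.ofReal ε) :
    ∫⁻ a, ENNReal.ofReal (-log (Y a)) ∂μ ≤ 1 := by
  have hlayer := lintegral_eq_lintegral_meas_lt μ
    (ae_of_all _ fun a => le_max_right (-log (Y a)) 0) (by fun_prop)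
  simp only [ENNReal.ofReal_max, ENNReal.ofReal_zero, zero_le, max_eq_left] at hlayer
  have htail (t : ℝ) (ht : t ∈ Ioi 0) :
      {a | t < max (-log (Y a)) 0} ⊆ {a | Y a < exp (-t)} := fun a ha => by
    have ha : t < -log (Y a) := (lt_max_iff.1 ha).resolve_right (not_lt.2 (le_of_lt ht))
    rcases le_or_gt (Y a) 0 with hY0 | hY0
    · exact hY0.trans_lt (exp_pos _)
    · exact (log_lt_iff_lt_exp hY0).1 (by linarith)
  calc ∫⁻ a, ENNReal.ofReal (-log (Y a)) ∂μ
      = ∫⁻ t in Ioi 0, μ {a | t < max (-log (Y a)) 0} := hlayer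
    _ ≤ ∫⁻ t in Ioi 0, ENNReal.ofReal (exp (-t)) := setLIntegral_mono' measurableSet_Ioi
        fun t ht => (measure_mono (htail t ht)).trans (hsmall _)
    _ = 1 := by
      rw [← ofReal_integral_eq_lintegral_ofReal (integrableOn_exp_neg_Ioi 0)
        (ae_of_all _ fun t => (exp_pos _).le), integral_exp_neg_Ioi_zero, ENNReal.ofReal_one]

lemma enorm_log_le_enorm_add_ofReal_neg_log (y : ℝ) :
    ‖log y‖ₑ ≤ ‖y‖ₑ + ENNReal.ofReal (-log y) := by
  rcases le_or_gt 0 (log y) with h | h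
  · refine le_add_right ?_
    rw [← ofReal_norm, ← ofReal_norm, norm_of_nonneg h, ← log_abs]
    exact ENNReal.ofReal_le_ofReal (log_le_self (abs_nonneg y))
  · refine le_add_left ?_
    rw [← ofReal_norm, norm_of_nonpos h.le]

lemma integrable_log_of_measure_lt_le (hY : Integrable Y μ)
    (hsmall : ∀ ε, μ {a | Y a < ε} ≤ ENNReal.ofReal ε) : Integrable (fun a => log (Y a)) μ := by
  refine ⟨(measurable_log.comp_aemeasurable hY.aemeasurable).aestronglyMeasurable, ?_⟩
  calc ∫⁻ a, ‖log (Y a)‖ₑ ∂μ ≤ ∫⁻ a, ‖Y a‖ₑ + ENNReal.ofReal (-log (Y a)) ∂μ :=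
        lintegral_mono fun a => enorm_log_le_enorm_add_ofReal_neg_log (Y a)
    _ = ∫⁻ a, ‖Y a‖ₑ ∂μ + ∫⁻ a, ENNReal.ofReal (-log (Y a)) ∂μ :=
        lintegral_add_left' hY.aemeasurable.enorm _
    _ < ∞ := ENNReal.add_lt_top.2 ⟨hY.2,
        (lintegral_ofReal_neg_log_le_one hY.aemeasurable hsmall).trans_lt ENNReal.one_lt_top⟩

end SmallBall

lemma lintegral_le_rpow_lintegral_pow {α : Type*} [MeasurableSpace α] {μ : Measure α}
    [IsProbabilityMeasure μ] {f : α → ℝ≥0∞} (hf : AEMeasurable f μ) {p : ℕ} (hp : p ≠ 0) :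
    ∫⁻ a, f a ∂μ ≤ (∫⁻ a, f a ^ p ∂μ) ^ (p⁻¹ : ℝ) := by
  simpa [eLpNorm', ENNReal.rpow_natCast] using eLpNorm'_le_eLpNorm'_of_exponent_le zero_lt_one
    (Nat.one_le_cast.2 (Nat.pos_of_ne_zero hp)) μ hf.aestronglyMeasurable

lemma lintegral_enorm_pow_lt_top_gaussianReal (m : ℝ) (v : ℝ≥0) (p : ℕ) :
    ∫⁻ x, ‖x‖ₑ ^ p ∂gaussianReal m v < ∞ := by
  rcases eq_or_ne p 0 with rfl | hp
  · simp
  simpa [ENNReal.rpow_natCast] using lintegral_rpow_enorm_lt_top_of_eLpNorm_lt_top (f := id)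
    (by exact_mod_cast hp) (ENNReal.natCast_ne_top p) (memLp_id_gaussianReal p).eLpNorm_lt_top

lemma lintegral_enorm_pow_two_mul_gaussianReal (v : ℝ≥0) (p : ℕ) :
    ∫⁻ x, ‖x‖ₑ ^ (2 * p) ∂gaussianReal 0 v = v ^ p * ∫⁻ x, ‖x‖ₑ ^ (2 * p) ∂gaussianReal 0 1 := by
  have hmap : (gaussianReal 0 1).map (√v * ·) = gaussianReal 0 v := by
    rw [gaussianReal_map_const_mul, mul_zero, mul_one]
    congr 1
    ext
    simp
  rw [← hmap, lintegral_map (by fun_prop) (by fun_prop), ← lintegral_const_mul _ (by fun_prop)]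
  congr with x
  rw [enorm_mul, mul_pow, pow_mul, ← enorm_pow, sq_sqrt v.coe_nonneg]
  simp

lemma gaussianReal_apply_le (m : ℝ) {v : ℝ≥0} (hv : v ≠ 0) (s : Set ℝ) :
    gaussianReal m v s ≤ ENNReal.ofReal (√(2 * π * v))⁻¹ * volume s := by
  rw [gaussianReal_apply m hv, ← setLIntegral_const]
  refine lintegral_mono fun x => ENNReal.ofReal_le_ofReal ?_
  rw [gaussianPDFReal]
  refine mul_le_of_le_one_right (by positivity) (exp_le_one_iff.2 ?_)
  exact div_nonpos_of_nonpos_of_nonneg (neg_nonpos.2 (sq_nonneg _)) (by positivity)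

lemma gaussianReal_setOf_abs_lt_le (ε : ℝ) : gaussianReal 0 1 {x | |x| < ε} ≤ ENNReal.ofReal ε := by
  rcases le_or_gt ε 0 with hε | hε
  · simp [fun x => (hε.trans (abs_nonneg x)).not_gt]
  have hconst : 2 / √(2 * π) ≤ 1 := by
    rw [div_le_one (by positivity), le_sqrt zero_le_two (by positivity)]
    linarith [pi_gt_three]
  have hball : {x : ℝ | |x| < ε} = Ioo (-ε) ε := by ext; simp [abs_lt]
  calc gaussianReal 0 1 {x | |x| < ε}
      ≤ ENNReal.ofReal (√(2 * π * (1 : ℝ≥0)))⁻¹ * volume (Ioo (-ε) ε) :=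
        hball ▸ gaussianReal_apply_le 0 one_ne_zero _
    _ = ENNReal.ofReal (2 / √(2 * π) * ε) := by
        rw [Real.volume_Ioo, ← ENNReal.ofReal_mul (by positivity)]
        rw [NNReal.coe_one, mul_one]
        congr 1
        ring
    _ ≤ ENNReal.ofReal ε := ENNReal.ofReal_le_ofReal (mul_le_of_le_one_left hε.le hconst)

noncomputable def osc (f : ℝ → ℝ) (s : Set ℝ) : ℝ := ⨆ q : s × s, |f q.1 - f q.2|

section Osc

variable {f : ℝ → ℝ} {s : Set ℝ} {C : ℝ}

lemma osc_le_two_mul (hs : s.Nonempty) (hC : ∀ t ∈ s, |f t| ≤ C) : osc f s ≤ 2 * C := by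
  have : Nonempty s := hs.to_subtype
  refine ciSup_le fun q => (abs_sub _ _).trans ?_
  linarith [hC q.1 q.1.2, hC q.2 q.2.2]

lemma abs_sub_le_osc (hC : ∀ t ∈ s, |f t| ≤ C) {a b : ℝ} (ha : a ∈ s) (hb : b ∈ s) :
    |f a - f b| ≤ osc f s := by
  refine le_ciSup (f := fun q : s × s => |f q.1 - f q.2|) ⟨2 * C, ?_⟩ (⟨a, ha⟩, ⟨b, hb⟩)
  rintro _ ⟨q, rfl⟩
  exact (abs_sub _ _).trans (by linarith [hC q.1 q.1.2, hC q.2 q.2.2])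

end Osc

noncomputable def dyadicIncrementL4 (f : ℝ → ℝ) (n : ℕ) : ℝ≥0∞ :=
  (∑ k ∈ Finset.range (2 ^ n), ‖f ((k + 1) / 2 ^ n) - f (k / 2 ^ n)‖ₑ ^ 4) ^ (4⁻¹ : ℝ)

section Chaining

variable {f : ℝ → ℝ}

lemma enorm_sub_le_dyadicIncrementL4 {n k : ℕ} (hk : k < 2 ^ n) :
    ‖f ((k + 1) / 2 ^ n) - f (k / 2 ^ n)‖ₑ ≤ dyadicIncrementL4 f n := by
  rw [← ENNReal.pow_rpow_inv_natCast four_ne_zero ‖_‖ₑ, dyadicIncrementL4]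
  norm_num only
  gcongr
  exact Finset.single_le_sum (f := fun k : ℕ => ‖f ((k + 1) / 2 ^ n) - f (k / 2 ^ n)‖ₑ ^ 4)
    (fun _ _ => zero_le) (Finset.mem_range.2 hk)

lemma enorm_apply_dyadic_le_sum (hf0 : f 0 = 0) (N : ℕ) {j : ℕ} (hj : j ≤ 2 ^ N) :
    ‖f (j / 2 ^ N)‖ₑ ≤ ∑ n ∈ Finset.range (N + 1), dyadicIncrementL4 f n := by
  induction N generalizing j with
  | zero =>
    rw [Finset.sum_range_one]
    interval_cases j
    · simp [hf0]
    · simpa [hf0] using enorm_sub_le_dyadicIncrementL4 (f := f) (n := 0) (k := 0) one_pos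
  | succ N ih =>
    rw [Finset.sum_range_succ]
    obtain ⟨i, rfl | rfl⟩ := Nat.even_or_odd' j
    · have hi : ((2 * i : ℕ) : ℝ) / 2 ^ (N + 1) = i / 2 ^ N := by push_cast; ring
      rw [hi]
      exact (ih (by omega)).trans le_self_add
    · have hi : (2 * i + 1 : ℕ) / (2 : ℝ) ^ (N + 1) = ((2 * i : ℕ) + 1) / 2 ^ (N + 1) := by
        push_cast; ring
      have hi' : ((2 * i : ℕ) : ℝ) / 2 ^ (N + 1) = i / 2 ^ N := by push_cast; ring
      have hstep := enorm_sub_le_dyadicIncrementL4 (f := f) (n := N + 1) (k := 2 * i) (by omega)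
      rw [hi', ← hi] at hstep
      set x : ℝ := (2 * i + 1 : ℕ) / 2 ^ (N + 1)
      calc ‖f x‖ₑ = ‖(f x - f (i / 2 ^ N)) + f (i / 2 ^ N)‖ₑ := by rw [sub_add_cancel]
        _ ≤ ‖f x - f (i / 2 ^ N)‖ₑ + ‖f (i / 2 ^ N)‖ₑ := enorm_add_le _ _
        _ ≤ dyadicIncrementL4 f (N + 1) + ∑ n ∈ Finset.range (N + 1), dyadicIncrementL4 f n :=
            add_le_add hstep (ih (by omega))
        _ = _ := add_comm _ _

lemma enorm_le_tsum_dyadicIncrementL4 (hf0 : f 0 = 0) (hf : Continuous f) {t : ℝ}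
    (ht : t ∈ Icc 0 1) : ‖f t‖ₑ ≤ ∑' n, dyadicIncrementL4 f n := by
  have hdyadic : Tendsto (fun N : ℕ => (⌊t * 2 ^ N⌋₊ : ℝ) / 2 ^ N) atTop (𝓝 t) :=
    (tendsto_nat_floor_mul_div_atTop ht.1).comp (tendsto_pow_atTop_atTop_of_one_lt one_lt_two)
  refine le_of_tendsto' ((hf.enorm.tendsto t).comp hdyadic) fun N => ?_
  have hfloor : ⌊t * 2 ^ N⌋₊ ≤ 2 ^ N := Nat.floor_le_of_le (by
    push_cast; exact mul_le_of_le_one_left (by positivity) ht.2)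
  exact (enorm_apply_dyadic_le_sum hf0 N hfloor).trans (ENNReal.sum_le_tsum _)

lemma abs_le_toReal_tsum_dyadicIncrementL4 (hf0 : f 0 = 0) (hf : Continuous f)
    (hS : ∑' n, dyadicIncrementL4 f n ≠ ∞) {t : ℝ} (ht : t ∈ Icc 0 1) :
    |f t| ≤ (∑' n, dyadicIncrementL4 f n).toReal := by
  rw [← ENNReal.ofReal_le_iff_le_toReal hS, ← enorm_eq_ofReal_abs]
  exact enorm_le_tsum_dyadicIncrementL4 hf0 hf ht

end Chaining

namespace IsTwoSidedBM

variable {Ω : Type*} [MeasurableSpace Ω] {P : Measure Ω} {B : ℝ → Ω → ℝ}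

lemma lintegral_enorm_sub_pow_four (hB : IsTwoSidedBM B P) (s t : ℝ) :
    ∫⁻ ω, ‖B t ω - B s ω‖ₑ ^ 4 ∂P
      = Real.nnabs (t - s) ^ 2 * ∫⁻ x, ‖x‖ₑ ^ 4 ∂gaussianReal 0 1 := by
  rw [← lintegral_map (f := fun x : ℝ => ‖x‖ₑ ^ 4) (g := fun ω => B t ω - B s ω) (by fun_prop)
    ((hB.measurable t).sub (hB.measurable s)), hB.incr]
  exact lintegral_enorm_pow_two_mul_gaussianReal _ 2

lemma measurable_dyadicIncrementL4 (hB : IsTwoSidedBM B P) (n : ℕ) :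
    Measurable fun ω => dyadicIncrementL4 (B · ω) n := by
  have := hB.measurable
  unfold dyadicIncrementL4
  fun_prop

lemma lintegral_dyadicIncrementL4_pow_four (hB : IsTwoSidedBM B P) (n : ℕ) :
    ∫⁻ ω, dyadicIncrementL4 (B · ω) n ^ 4 ∂P = 2⁻¹ ^ n * ∫⁻ x, ‖x‖ₑ ^ 4 ∂gaussianReal 0 1 := by
  have hlen (k : ℕ) : Real.nnabs ((k + 1) / 2 ^ n - k / 2 ^ n) = 2⁻¹ ^ n := by
    ext; simp [add_div]
  have hpow := ENNReal.rpow_inv_natCast_pow (n := 4) four_ne_zero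
  simp only [Nat.cast_ofNat] at hpow
  simp only [dyadicIncrementL4, hpow]
  rw [lintegral_finsetSum _ fun k _ => by have := hB.measurable; fun_prop]
  simp only [hB.lintegral_enorm_sub_pow_four, hlen, Finset.sum_const, Finset.card_range,
    nsmul_eq_mul]
  push_cast
  rw [← mul_assoc, ← pow_mul, pow_mul', sq, ← mul_pow, ← mul_assoc,
    ENNReal.mul_inv_cancel two_ne_zero ENNReal.ofNat_ne_top, one_mul]

lemma lintegral_dyadicIncrementL4_le [IsProbabilityMeasure P] (hB : IsTwoSidedBM B P) (n : ℕ) :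
    ∫⁻ ω, dyadicIncrementL4 (B · ω) n ∂P
      ≤ (2⁻¹ ^ n * ∫⁻ x, ‖x‖ₑ ^ 4 ∂gaussianReal 0 1) ^ (4⁻¹ : ℝ) := by
  simpa [hB.lintegral_dyadicIncrementL4_pow_four] using
    lintegral_le_rpow_lintegral_pow (μ := P) (hB.measurable_dyadicIncrementL4 n).aemeasurable
      four_ne_zero

lemma lintegral_tsum_dyadicIncrementL4_lt_top [IsProbabilityMeasure P] (hB : IsTwoSidedBM B P) :
    ∫⁻ ω, ∑' n, dyadicIncrementL4 (B · ω) n ∂P < ∞ := by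
  rw [lintegral_tsum fun n => (hB.measurable_dyadicIncrementL4 n).aemeasurable]
  refine (ENNReal.tsum_le_tsum hB.lintegral_dyadicIncrementL4_le).trans_lt ?_
  have hgeom (n : ℕ) : ((2⁻¹ : ℝ≥0∞) ^ n) ^ (4⁻¹ : ℝ) = ((2⁻¹ : ℝ≥0∞) ^ (4⁻¹ : ℝ)) ^ n := by
    rw [← ENNReal.rpow_natCast, ← ENNReal.rpow_natCast, ← ENNReal.rpow_mul, ← ENNReal.rpow_mul,
      mul_comm]
  simp only [ENNReal.mul_rpow_of_nonneg _ _ (by norm_num : (0 : ℝ) ≤ 4⁻¹), hgeom,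
    ENNReal.tsum_mul_right, ENNReal.tsum_geometric]
  refine ENNReal.mul_lt_top (ENNReal.inv_lt_top.2 (tsub_pos_iff_lt.2 ?_)) ?_
  · exact ENNReal.rpow_lt_one (ENNReal.inv_lt_one.2 ENNReal.one_lt_two) (by norm_num)
  · exact ENNReal.rpow_lt_top_of_nonneg (by norm_num)
      (lintegral_enorm_pow_lt_top_gaussianReal 0 1 4).ne

lemma ae_abs_sub_le_osc_and_osc_le [IsProbabilityMeasure P] (hB : IsTwoSidedBM B P) :
    ∀ᵐ ω ∂P, |B 1 ω - B 0 ω| ≤ osc (B · ω) (Icc 0 1) ∧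
      ENNReal.ofReal (osc (B · ω) (Icc 0 1)) ≤ 2 * ∑' n, dyadicIncrementL4 (B · ω) n := by
  have hfin : ∀ᵐ ω ∂P, ∑' n, dyadicIncrementL4 (B · ω) n < ∞ :=
    ae_lt_top (.tsum hB.measurable_dyadicIncrementL4)
      hB.lintegral_tsum_dyadicIncrementL4_lt_top.ne
  filter_upwards [hB.init, hB.cont, hfin] with ω h0 hc hS
  have hbound (t : ℝ) (ht : t ∈ Icc 0 1) := abs_le_toReal_tsum_dyadicIncrementL4 h0 hc hS.ne ht
  refine ⟨abs_sub_le_osc hbound (right_mem_Icc.2 zero_le_one) (left_mem_Icc.2 zero_le_one), ?_⟩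
  calc ENNReal.ofReal (osc (B · ω) (Icc 0 1))
      ≤ ENNReal.ofReal (2 * (∑' n, dyadicIncrementL4 (B · ω) n).toReal) :=
        ENNReal.ofReal_le_ofReal (osc_le_two_mul (nonempty_Icc.2 zero_le_one) hbound)
    _ = 2 * ∑' n, dyadicIncrementL4 (B · ω) n := by
        rw [ENNReal.ofReal_mul zero_le_two, ENNReal.ofReal_toReal hS.ne, ENNReal.ofReal_ofNat]

lemma integrable_osc [IsProbabilityMeasure P] (hB : IsTwoSidedBM B P)
    (hX : AEMeasurable (fun ω => osc (B · ω) (Icc 0 1)) P) :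
    Integrable (fun ω => osc (B · ω) (Icc 0 1)) P := by
  refine ⟨hX.aestronglyMeasurable, ?_⟩
  calc ∫⁻ ω, ‖osc (B · ω) (Icc 0 1)‖ₑ ∂P ≤ ∫⁻ ω, 2 * ∑' n, dyadicIncrementL4 (B · ω) n ∂P := by
        refine lintegral_mono_ae ?_
        filter_upwards [hB.ae_abs_sub_le_osc_and_osc_le] with ω h
        rw [enorm_eq_ofReal ((abs_nonneg _).trans h.1)]
        exact h.2
    _ < ∞ := by
        rw [lintegral_const_mul' _ _ ENNReal.ofNat_ne_top]
        exact ENNReal.mul_lt_top ENNReal.ofNat_lt_top hB.lintegral_tsum_dyadicIncrementL4_lt_top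

lemma measure_osc_lt_le [IsProbabilityMeasure P] (hB : IsTwoSidedBM B P) (ε : ℝ) :
    P {ω | osc (B · ω) (Icc 0 1) < ε} ≤ ENNReal.ofReal ε := by
  calc P {ω | osc (B · ω) (Icc 0 1) < ε} ≤ P {ω | |B 1 ω - B 0 ω| < ε} := by
        refine measure_mono_ae ?_
        filter_upwards [hB.ae_abs_sub_le_osc_and_osc_le] with ω h hω
        exact h.1.trans_lt hω
    _ = gaussianReal 0 1 {x | |x| < ε} := by
        have := hB.measurable
        have hlaw : P.map (fun ω => B 1 ω - B 0 ω) = gaussianReal 0 1 := by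
          simpa using hB.incr 0 1
        rw [← hlaw, Measure.map_apply (by fun_prop)
          (measurableSet_lt (by fun_prop) measurable_const)]
        rfl
    _ ≤ ENNReal.ofReal ε := gaussianReal_setOf_abs_lt_le ε

end IsTwoSidedBM

theorem stmt13_general {Ω : Type*} [MeasurableSpace Ω] (P : Measure Ω) [IsProbabilityMeasure P]
    (B : ℝ → Ω → ℝ) (hB : IsTwoSidedBM B P)
    {Ω' : Type*} [MeasurableSpace Ω'] (P' : Measure Ω')
    (D : ℕ → Ω' → ℝ)
    (hcopy : ∀ i, ProbabilityTheory.IdentDistrib (D i)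
      (fun ω => ⨆ q : Set.Icc (0:ℝ) 1 × Set.Icc (0:ℝ) 1, |B (q.1 : ℝ) ω - B (q.2 : ℝ) ω|)
      P' P) :
    ∀ᵐ ω ∂P', ∃ l : ℝ, 0 < l ∧
      Filter.Tendsto (fun n => ∏ i ∈ Finset.range n, (D (i + 1) ω) ^ ((2:ℝ) ^ (-(i:ℝ))))
        Filter.atTop (nhds l) := by
  have hD (i : ℕ) : IdentDistrib (D i) (fun ω => osc (B · ω) (Icc 0 1)) P' P := hcopy i
  have hX_int := hB.integrable_osc (hD 0).aemeasurable_snd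
  have hX_small := hB.measure_osc_lt_le
  have hpos : ∀ᵐ ω ∂P', ∀ i, 0 < D i ω := ae_all_iff.2 fun i =>
    (hD i).symm.ae_snd measurableSet_Ioi (ae_pos_of_measure_lt_le hX_small)
  have hsum : ∀ᵐ ω ∂P', Summable fun i => (2⁻¹ : ℝ) ^ i * log (D (i + 1) ω) :=
    ae_summable_geometric_mul_of_identDistrib (fun i => (hD (i + 1)).comp measurable_log)
      (integrable_log_of_measure_lt_le hX_int hX_small) (by norm_num)
  have hweight (i : ℕ) : (2 : ℝ) ^ (-(i : ℝ)) = 2⁻¹ ^ i := by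
    rw [rpow_neg zero_le_two, rpow_natCast, inv_pow]
  filter_upwards [hpos, hsum] with ω hω hs
  simp only [hweight]
  exact ⟨_, exp_pos _, tendsto_prod_rpow_of_summable_mul_log (fun i => hω (i + 1)) hs⟩

/-- If `D₁, D₂, …` are i.i.d. copies of the oscillation of Brownian motion on `[0,1]`,
then the infinite product `∏_{i=1}^∞ D_i^{2^{-(i-1)}}` converges a.s. in `(0,∞)`. -/
theorem stmt13 {Ω : Type*} [MeasurableSpace Ω] (P : Measure Ω) [IsProbabilityMeasure P]
    (B : ℝ → Ω → ℝ) (hB : IsTwoSidedBM B P)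
    {Ω' : Type*} [MeasurableSpace Ω'] (P' : Measure Ω') [IsProbabilityMeasure P']
    (D : ℕ → Ω' → ℝ) (hDm : ∀ i, Measurable (D i))
    (hiid : ProbabilityTheory.iIndepFun D P')
    (hcopy : ∀ i, ProbabilityTheory.IdentDistrib (D i)
      (fun ω => ⨆ q : Set.Icc (0:ℝ) 1 × Set.Icc (0:ℝ) 1, |B (q.1 : ℝ) ω - B (q.2 : ℝ) ω|)
      P' P) :
    ∀ᵐ ω ∂P', ∃ l : ℝ, 0 < l ∧
      Filter.Tendsto (fun n => ∏ i ∈ Finset.range n, (D (i + 1) ω) ^ ((2:ℝ) ^ (-(i:ℝ))))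
        Filter.atTop (nhds l) :=
  stmt13_general P B hB P' D hcopy
end
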